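/- Let f₁,…,f_m be quadratic polynomials on ℝⁿ and q a quadratic polynomial with T = {x : q(x) ≥ 0} nonempty (possibly noncompact). With V and W defined as the parameterized image and the first-order moment SDP relaxation respectively, the closures satisfy closure(conv(V)) = closure(W). -/

import Mathlib

open Matrix Set

/-- Frobenius inner product `A • B = trace(AB)`. -/
noncomputable def frob {n : ℕ} (A B : Matrix (Fin n) (Fin n) ℝ) : ℝ := (A * B).trace

/-- The moment matrix `[[1, xᵀ],[x, X]]`. -/
def momMat {n : ℕ} (x : Fin n → ℝ) (X : Matrix (Fin n) (Fin n) ℝ) :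
    Matrix (Fin 1 ⊕ Fin n) (Fin 1 ⊕ Fin n) ℝ :=
  Matrix.fromBlocks 1 (Matrix.replicateRow (Fin 1) x) (Matrix.replicateCol (Fin 1) x) X


section roots
variable {β ℓ γ s0 : ℝ}

lemma root_zero (hγ : γ ≠ 0) (hs0sq : s0 ^ 2 = ℓ ^ 2 - 4 * γ * β) (σ : ℝ) (hσ : σ = 1 ∨ σ = -1) :
    β + ((-ℓ + σ * s0) / (2 * γ)) * ℓ + ((-ℓ + σ * s0) / (2 * γ)) ^ 2 * γ = 0 := by
  have h2 : (2 * γ) ≠ 0 := by simpa using hγ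
  have hr : ((-ℓ + σ * s0) / (2 * γ)) * (2 * γ) = -ℓ + σ * s0 := div_mul_cancel₀ _ h2
  have h4 : (2 * γ) ^ 2 * (β + ((-ℓ + σ * s0) / (2 * γ)) * ℓ + ((-ℓ + σ * s0) / (2 * γ)) ^ 2 * γ) = 0 := by
    have e : (2 * γ) ^ 2 * (β + ((-ℓ + σ * s0) / (2 * γ)) * ℓ + ((-ℓ + σ * s0) / (2 * γ)) ^ 2 * γ)
        = 4 * γ ^ 2 * β + ℓ * (2 * γ) * (((-ℓ + σ * s0) / (2 * γ)) * (2 * γ))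
          + γ * (((-ℓ + σ * s0) / (2 * γ)) * (2 * γ)) ^ 2 := by ring
    rw [e, hr]
    rcases hσ with h | h <;> rw [h] <;> linear_combination γ * hs0sq
  exact (mul_eq_zero.mp h4).resolve_left (pow_ne_zero _ h2)

lemma root_prod (hγ : γ ≠ 0) (hs0sq : s0 ^ 2 = ℓ ^ 2 - 4 * γ * β) :
    ((-ℓ + (-1) * s0) / (2 * γ)) * ((-ℓ + 1 * s0) / (2 * γ)) = β / γ := by
  have h2 : (2 * γ) * (2 * γ) ≠ 0 := by simp [hγ]
  rw [div_mul_div_comm, div_eq_div_iff h2 hγ]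
  linear_combination -γ * hs0sq
end roots

lemma combo3 {m : ℕ} {C : Set (Fin m → ℝ)} (hC : Convex ℝ C) (g lam kap : Fin m → ℝ)
    (t w : Fin 3 → ℝ) (hw : ∀ i, 0 ≤ w i) (hsum : ∑ i, w i = 1)
    (hmem : ∀ i, g + t i • lam + (t i)^2 • kap ∈ C) :
    g + (∑ i, w i * t i) • lam + (∑ i, w i * (t i)^2) • kap ∈ C := by
  have h := hC.sum_mem (t := Finset.univ) (w := w) (z := fun i => g + t i • lam + (t i)^2 • kap)
    (fun i _ => hw i) hsum (fun i _ => hmem i)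
  have : ∑ i, w i • (g + t i • lam + (t i)^2 • kap)
      = g + (∑ i, w i * t i) • lam + (∑ i, w i * (t i)^2) • kap := by
    simp only [smul_add, Finset.sum_add_distrib, smul_smul, ← Finset.sum_smul, hsum, one_smul]
  rwa [this] at h

set_option maxHeartbeats 2000000 in
lemma oneDim {m : ℕ} {C : Set (Fin m → ℝ)} (hC : Convex ℝ C) (hCl : IsClosed C)
    (g lam kap : Fin m → ℝ) (β ℓ γ : ℝ) (hβγ : 0 ≤ β + γ)
    (h : ∀ t : ℝ, 0 ≤ β + t * ℓ + t ^ 2 * γ → g + t • lam + t ^ 2 • kap ∈ C) :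
    g + kap ∈ C := by
  suffices hs : ∀ ε : ℝ, 0 < ε → ∃ s : ℝ, |s| ≤ ε ∧ g + s • lam + kap ∈ C by
    rw [← hCl.closure_eq, Metric.mem_closure_iff]
    intro ε hε
    obtain ⟨s, hsle, hsmem⟩ := hs (ε / (‖lam‖ + 1)) (by positivity)
    refine ⟨g + s • lam + kap, hsmem, ?_⟩
    have hd : dist (g + kap) (g + s • lam + kap) = |s| * ‖lam‖ := by
      rw [dist_eq_norm]
      rw [show (g + kap) - (g + s • lam + kap) = (-s) • lam by module]
      rw [norm_smul, Real.norm_eq_abs, abs_neg]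
    rw [hd]
    have h1 : 0 ≤ ‖lam‖ := norm_nonneg _
    have h2 : |s| * ‖lam‖ ≤ (ε / (‖lam‖ + 1)) * ‖lam‖ := mul_le_mul_of_nonneg_right hsle h1
    have h3 : (ε / (‖lam‖ + 1)) * ‖lam‖ < ε := by
      rw [div_mul_eq_mul_div, div_lt_iff₀ (by positivity)]
      nlinarith
    linarith
  have mem3 : ∀ (t w : Fin 3 → ℝ), (∀ i, 0 ≤ w i) → (∑ i, w i = 1) →
      (∀ i, 0 ≤ β + t i * ℓ + (t i) ^ 2 * γ) → (∑ i, w i * (t i) ^ 2) = 1 →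
      g + (∑ i, w i * t i) • lam + kap ∈ C := by
    intro t w hw hsum hfeas hm2
    have := combo3 hC g lam kap t w hw hsum (fun i => h (t i) (hfeas i))
    rwa [hm2, one_smul] at this
  intro ε hε
  rcases lt_trichotomy γ 0 with hγ | hγ | hγ
  · -- γ < 0 : exact, using the two roots and 0
    have hβpos : 0 < β := by nlinarith
    have hdisc : 0 < ℓ ^ 2 - 4 * γ * β := by nlinarith
    set s0 := Real.sqrt (ℓ ^ 2 - 4 * γ * β) with hs0def
    have hs0sq : s0 ^ 2 = ℓ ^ 2 - 4 * γ * β := Real.sq_sqrt hdisc.le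
    have hs0pos : 0 < s0 := Real.sqrt_pos.2 hdisc
    have hs0gt : |ℓ| < s0 := by nlinarith [abs_nonneg ℓ, sq_abs ℓ]
    set r1 := (-ℓ + (-1) * s0) / (2 * γ) with hr1def
    set r2 := (-ℓ + 1 * s0) / (2 * γ) with hr2def
    have habs1 := neg_abs_le ℓ
    have habs2 := le_abs_self ℓ
    have hr1pos : 0 < r1 := div_pos_of_neg_of_neg (by linarith) (by linarith)
    have hr2neg : r2 < 0 := div_neg_of_pos_of_neg (by linarith) (by linarith)
    have hp1 : β + r1 * ℓ + r1 ^ 2 * γ = 0 := root_zero hγ.ne hs0sq (-1) (Or.inr rfl)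
    have hp2 : β + r2 * ℓ + r2 ^ 2 * γ = 0 := root_zero hγ.ne hs0sq 1 (Or.inl rfl)
    have hprod : r1 * r2 = β / γ := root_prod hγ.ne hs0sq
    have hprodneg : r1 * r2 < 0 := mul_neg_of_pos_of_neg hr1pos hr2neg
    clear_value s0 r1 r2
    have hm2₀ : 1 ≤ -(r1 * r2) := by
      have h1 : β / γ ≤ -1 := by rw [div_le_iff_of_neg hγ]; linarith
      rw [hprod]; linarith
    have hdiff : 0 < r1 - r2 := by linarith
    set μ := 1 / (-(r1 * r2)) with hμdef
    have hμpos : 0 < μ := by rw [hμdef]; positivity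
    have hμle : μ ≤ 1 := by rw [hμdef, div_le_one (by linarith)]; linarith
    set α1 := -r2 / (r1 - r2) with hα1def
    set α2 := r1 / (r1 - r2) with hα2def
    have hα1 : 0 ≤ α1 := div_nonneg (by linarith) hdiff.le
    have hα2 : 0 ≤ α2 := div_nonneg (by linarith) hdiff.le
    have hα12 : α1 + α2 = 1 := by
      rw [hα1def, hα2def, ← add_div, div_eq_one_iff_eq hdiff.ne']; ring
    have e1 : μ * α2 * r2 + μ * α1 * r1 + (1 - μ) * 0 = 0 := by
      rw [hα1def, hα2def]; field_simp; ring
    have e2 : μ * α2 * r2 ^ 2 + μ * α1 * r1 ^ 2 + (1 - μ) * 0 ^ 2 = 1 := by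
      rw [hμdef, hα1def, hα2def]
      field_simp [hdiff.ne', hprodneg.ne, hr2neg.ne]
      ring
    refine ⟨0, by simpa using hε.le, ?_⟩
    have h0 : (0:ℝ) = ∑ i, (![μ * α2, μ * α1, 1 - μ]) i * (![r2, r1, 0]) i := by
      simp only [Fin.sum_univ_three]
      simp
      linear_combination -e1
    rw [h0]
    apply mem3
    · intro i
      fin_cases i <;> simp
      · exact mul_nonneg hμpos.le hα2
      · exact mul_nonneg hμpos.le hα1
      · linarith
    · simp only [Fin.sum_univ_three]; simp; linear_combination μ * hα12
    · intro i
      fin_cases i <;> simp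
      · linarith [hp2]
      · linarith [hp1]
      · linarith
    · simp only [Fin.sum_univ_three]; simp; linear_combination e2
  · -- γ = 0
    have hβ0 : 0 ≤ β := by linarith
    set σ : ℝ := if 0 ≤ ℓ then 1 else -1 with hσdef
    set R : ℝ := max 1 (2 / ε) with hRdef
    have hR1 : (1:ℝ) ≤ R := le_max_left _ _
    have hR2 : 2 / ε ≤ R := le_max_right _ _
    have hRpos : 0 < R := by linarith
    have hσsq : σ ^ 2 = 1 := by rw [hσdef]; split <;> norm_num
    have hσℓ : 0 ≤ σ * ℓ := by
      rw [hσdef]; split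
      · simpa
      · push_neg at *; nlinarith
    have hσabs : |σ| = 1 := by rw [hσdef]; split <;> simp
    clear_value σ R
    have hw0 : 0 ≤ 1 - 1 / R ^ 2 := by
      rw [sub_nonneg, div_le_one (by positivity)]
      nlinarith
    have hm2' : (1 - 1 / R ^ 2) * 0 ^ 2 + (1 / R ^ 2) * (σ * R) ^ 2 + 0 * 0 ^ 2 = 1 := by
      rw [mul_pow, hσsq]
      field_simp
      ring
    have hfeas1 : 0 ≤ β + (σ * R) * ℓ + (σ * R) ^ 2 * γ := by
      rw [hγ]
      nlinarith [mul_nonneg hσℓ hRpos.le]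
    refine ⟨σ / R, ?_, ?_⟩
    · rw [abs_div, hσabs, abs_of_pos hRpos, div_le_iff₀ hRpos]
      have h2ε : 2 ≤ ε * R := by
        have := (div_le_iff₀ hε).mp hR2
        linarith [mul_comm R ε]
      linarith
    · have h0 : σ / R = ∑ i, (![1 - 1 / R ^ 2, 1 / R ^ 2, 0]) i * (![0, σ * R, 0]) i := by
        simp only [Fin.sum_univ_three, Matrix.cons_val_zero, Matrix.cons_val_one,
          Matrix.head_cons, Matrix.cons_val_two, Matrix.tail_cons]
        field_simp
        ring
      rw [h0]
      apply mem3
      · intro i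
        fin_cases i
        · simpa using hw0
        · simp; positivity
        · simp
      · simp only [Fin.sum_univ_three, Matrix.cons_val_zero, Matrix.cons_val_one,
          Matrix.head_cons, Matrix.cons_val_two, Matrix.tail_cons]
        ring
      · intro i
        fin_cases i
        · simp [hγ]; linarith
        · simpa using hfeas1
        · simp [hγ]; linarith
      · simp only [Fin.sum_univ_three, Matrix.cons_val_zero, Matrix.cons_val_one,
          Matrix.head_cons, Matrix.cons_val_two, Matrix.tail_cons]
        linear_combination hm2'
  · -- γ > 0
    rcases le_or_gt 0 β with hβ0 | hβ0
    · -- β ≥ 0 : points 0, R, -R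
      set R : ℝ := max 1 (|ℓ| / γ) with hRdef
      have hR1 : (1:ℝ) ≤ R := le_max_left _ _
      have hR2 : |ℓ| / γ ≤ R := le_max_right _ _
      have hRpos : 0 < R := by linarith
      have hRγ : |ℓ| ≤ R * γ := by rwa [div_le_iff₀ hγ] at hR2
      have habs1 := neg_abs_le ℓ
      have habs2 := le_abs_self ℓ
      clear_value R
      have hw0 : 0 ≤ 1 - 1 / R ^ 2 := by
        rw [sub_nonneg, div_le_one (by positivity)]
        nlinarith
      have hfeasR : 0 ≤ β + R * ℓ + R ^ 2 * γ := by nlinarith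
      have hfeasR' : 0 ≤ β + (-R) * ℓ + (-R) ^ 2 * γ := by nlinarith
      refine ⟨0, by simpa using hε.le, ?_⟩
      have h0 : (0:ℝ) = ∑ i, (![1 - 1 / R ^ 2, 1 / (2 * R ^ 2), 1 / (2 * R ^ 2)]) i * (![0, R, -R]) i := by
        simp only [Fin.sum_univ_three, Matrix.cons_val_zero, Matrix.cons_val_one,
          Matrix.head_cons, Matrix.cons_val_two, Matrix.tail_cons]
        ring
      rw [h0]
      apply mem3
      · intro i
        fin_cases i
        · simpa using hw0
        · simp; positivity
        · simp; positivity
      · simp only [Fin.sum_univ_three, Matrix.cons_val_zero, Matrix.cons_val_one,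
          Matrix.head_cons, Matrix.cons_val_two, Matrix.tail_cons]
        field_simp
        ring
      · intro i
        fin_cases i
        · simp; linarith
        · simpa using hfeasR
        · simpa using hfeasR'
      · simp only [Fin.sum_univ_three, Matrix.cons_val_zero, Matrix.cons_val_one,
          Matrix.head_cons, Matrix.cons_val_two, Matrix.tail_cons]
        field_simp
        ring
    · -- γ > 0, β < 0 : roots r1 ≤ 0 ≤ r2 plus far point R
      have hdisc : 0 < ℓ ^ 2 - 4 * γ * β := by nlinarith
      set s0 := Real.sqrt (ℓ ^ 2 - 4 * γ * β) with hs0def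
      have hs0sq : s0 ^ 2 = ℓ ^ 2 - 4 * γ * β := Real.sq_sqrt hdisc.le
      have hs0pos : 0 < s0 := Real.sqrt_pos.2 hdisc
      have hs0gt : |ℓ| < s0 := by
        have h2 : ℓ ^ 2 < ℓ ^ 2 - 4 * γ * β := by nlinarith
        calc |ℓ| = Real.sqrt (ℓ ^ 2) := (Real.sqrt_sq_eq_abs ℓ).symm
          _ < s0 := by rw [hs0def]; exact Real.sqrt_lt_sqrt (sq_nonneg ℓ) h2
      set r1 := (-ℓ + (-1) * s0) / (2 * γ) with hr1def
      set r2 := (-ℓ + 1 * s0) / (2 * γ) with hr2def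
      have habs1 := neg_abs_le ℓ
      have habs2 := le_abs_self ℓ
      have hr1neg : r1 < 0 := div_neg_of_neg_of_pos (by linarith) (by linarith)
      have hr2pos : 0 < r2 := div_pos (by linarith) (by linarith)
      have hp1 : β + r1 * ℓ + r1 ^ 2 * γ = 0 := root_zero hγ.ne' hs0sq (-1) (Or.inr rfl)
      have hp2 : β + r2 * ℓ + r2 ^ 2 * γ = 0 := root_zero hγ.ne' hs0sq 1 (Or.inl rfl)
      have hprod : r1 * r2 = β / γ := root_prod hγ.ne' hs0sq
      have hprod' : r1 * r2 * γ = β := by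
        rw [hprod, div_mul_cancel₀ _ hγ.ne']
      have hsum'' : (r1 + r2) * γ = -ℓ := by
        have h2γ : (2 : ℝ) * γ ≠ 0 := by simpa using hγ.ne'
        rw [hr1def, hr2def, ← add_div, div_mul_eq_mul_div, div_eq_iff h2γ]
        ring
      clear_value s0 r1 r2
      set M := -(r1 * r2) with hMdef
      have hMpos : 0 < M := by
        rw [hMdef]; linarith [mul_neg_of_neg_of_pos hr1neg hr2pos]
      have hMle : M ≤ 1 := by
        rw [hMdef, hprod]
        have : -(β / γ) = (-β) / γ := by ring
        rw [this, div_le_one hγ]; linarith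
      clear_value M
      set R : ℝ := max 2 (max r2 (3 / ε)) with hRdef
      have hR2 : (2:ℝ) ≤ R := le_max_left _ _
      have hRr2 : r2 ≤ R := le_trans (le_max_left _ _) (le_max_right _ _)
      have hRε : 3 / ε ≤ R := le_trans (le_max_right _ _) (le_max_right _ _)
      have hRpos : 0 < R := by linarith
      clear_value R
      have hid : β + R * ℓ + R ^ 2 * γ = γ * (R - r1) * (R - r2) := by
        linear_combination (-1) * hprod' + R * hsum''
      have hpR : 0 ≤ β + R * ℓ + R ^ 2 * γ := by
        rw [hid]
        exact mul_nonneg (mul_nonneg hγ.le (by linarith)) (by linarith)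
      have hden : 0 < R ^ 2 - M := by nlinarith [sq_nonneg (R - 2)]
      set δ := (1 - M) / (R ^ 2 - M) with hδdef
      have hδ0 : 0 ≤ δ := div_nonneg (by linarith) hden.le
      have hδ1 : δ ≤ 1 := by rw [hδdef, div_le_one hden]; nlinarith
      have hδm2 : δ * (R ^ 2 - M) = 1 - M := div_mul_cancel₀ _ hden.ne'
      have hδsmall : δ * R ≤ 2 / R := by
        have h1 : δ ≤ 2 / R ^ 2 := by
          rw [hδdef, div_le_div_iff₀ hden (by positivity)]
          nlinarith
        calc δ * R ≤ (2 / R ^ 2) * R := mul_le_mul_of_nonneg_right h1 hRpos.le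
          _ = 2 / R := by rw [pow_two, div_mul_eq_mul_div, mul_comm R R, ← div_div,
            mul_div_assoc, div_self hRpos.ne', mul_one]
      clear_value δ
      have hdiff : 0 < r2 - r1 := by linarith
      set α1 := r2 / (r2 - r1) with hα1def
      set α2 := -r1 / (r2 - r1) with hα2def
      have hα1 : 0 ≤ α1 := div_nonneg hr2pos.le hdiff.le
      have hα2 : 0 ≤ α2 := div_nonneg (by linarith) hdiff.le
      have hα12 : α1 + α2 = 1 := by
        rw [hα1def, hα2def, ← add_div, div_eq_one_iff_eq hdiff.ne']; ring
      have e1 : (1 - δ) * α1 * r1 + (1 - δ) * α2 * r2 + δ * R = δ * R := by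
        rw [hα1def, hα2def]; field_simp; ring
      have e2 : (1 - δ) * α1 * r1 ^ 2 + (1 - δ) * α2 * r2 ^ 2 + δ * R ^ 2 = 1 := by
        have epair : α1 * r1 ^ 2 + α2 * r2 ^ 2 = M := by
          rw [hα1def, hα2def, hMdef]; field_simp; ring
        have : (1 - δ) * α1 * r1 ^ 2 + (1 - δ) * α2 * r2 ^ 2
            = (1 - δ) * (α1 * r1 ^ 2 + α2 * r2 ^ 2) := by ring
        rw [this, epair]
        linear_combination hδm2
      refine ⟨δ * R, ?_, ?_⟩
      · rw [abs_of_nonneg (mul_nonneg hδ0 hRpos.le)]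
        have h2ε : 3 ≤ ε * R := by
          have := (div_le_iff₀ hε).mp hRε
          linarith [mul_comm R ε]
        have : 2 / R ≤ ε := by
          rw [div_le_iff₀ hRpos]
          linarith
        linarith [hδsmall]
      · have h0 : δ * R = ∑ i, (![(1 - δ) * α1, (1 - δ) * α2, δ]) i * (![r1, r2, R]) i := by
          simp only [Fin.sum_univ_three]; simp; linear_combination -e1
        rw [h0]
        apply mem3
        · intro i
          fin_cases i <;> simp
          · exact mul_nonneg (by linarith) hα1
          · exact mul_nonneg (by linarith) hα2
          · exact hδ0
        · simp only [Fin.sum_univ_three]; simp; linear_combination (1 - δ) * hα12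
        · intro i
          fin_cases i <;> simp
          · linarith [hp1]
          · linarith [hp2]
          · linarith [hpR]
        · simp only [Fin.sum_univ_three]; simp; linear_combination e2


lemma quad_expand {n : ℕ} (M : Matrix (Fin n) (Fin n) ℝ) (x u : Fin n → ℝ) (t : ℝ) :
    (x + t • u) ⬝ᵥ M *ᵥ (x + t • u)
      = x ⬝ᵥ M *ᵥ x + t * (u ⬝ᵥ M *ᵥ x + x ⬝ᵥ M *ᵥ u) + t ^ 2 * (u ⬝ᵥ M *ᵥ u) := by
  simp [dotProduct_add, add_dotProduct, mulVec_add, mulVec_smul, dotProduct_smul,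
    smul_dotProduct, smul_eq_mul]
  ring

lemma lin_expand {n : ℕ} (b x u : Fin n → ℝ) (t : ℝ) :
    b ⬝ᵥ (x + t • u) = b ⬝ᵥ x + t * (b ⬝ᵥ u) := by
  simp [dotProduct_add, dotProduct_smul, smul_eq_mul]

lemma frob_vecMulVec {n : ℕ} (A : Matrix (Fin n) (Fin n) ℝ) (u v : Fin n → ℝ) :
    frob A (vecMulVec u v) = v ⬝ᵥ A *ᵥ u := by
  simp only [frob, trace, diag, mul_apply, vecMulVec_apply, dotProduct, mulVec,
    Finset.mul_sum]
  exact Finset.sum_congr rfl fun i _ => Finset.sum_congr rfl fun j _ => by ring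

lemma frob_add {n : ℕ} (A B C : Matrix (Fin n) (Fin n) ℝ) :
    frob A (B + C) = frob A B + frob A C := by
  simp [frob, mul_add]

lemma frob_sum {n N : ℕ} (A : Matrix (Fin n) (Fin n) ℝ) (f : Fin N → Matrix (Fin n) (Fin n) ℝ) :
    frob A (∑ j, f j) = ∑ j, frob A (f j) := by
  simp [frob, Finset.mul_sum, trace_sum]

lemma frob_smul {n : ℕ} (A : Matrix (Fin n) (Fin n) ℝ) (c : ℝ) (B : Matrix (Fin n) (Fin n) ℝ) :
    frob A (c • B) = c * frob A B := by
  simp [frob, Matrix.mul_smul, trace_smul]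

lemma momMat_quadform {n : ℕ} (x : Fin n → ℝ) (X : Matrix (Fin n) (Fin n) ℝ)
    (s : ℝ) (v : Fin n → ℝ) :
    (Sum.elim (fun _ => s) v) ⬝ᵥ (momMat x X) *ᵥ (Sum.elim (fun _ => s) v)
      = s ^ 2 + 2 * s * (x ⬝ᵥ v) + v ⬝ᵥ X *ᵥ v := by
  simp [momMat, dotProduct, mulVec, Fintype.sum_sum_type, fromBlocks_apply₁₁,
    fromBlocks_apply₁₂, fromBlocks_apply₂₁, fromBlocks_apply₂₂, Finset.mul_sum,
    Finset.sum_add_distrib, replicateRow_apply, replicateCol_apply, one_apply]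
  have h1 : ∑ i, v i * (x i * s + ∑ j, X i j * v j)
      = (∑ i, v i * (x i * s)) + ∑ i, v i * ∑ j, X i j * v j := by
    rw [← Finset.sum_add_distrib]
    exact Finset.sum_congr rfl fun i _ => by ring
  rw [h1]
  have h2 : ∑ i, 2 * s * (x i * v i) = s * (∑ i, x i * v i) + ∑ i, v i * (x i * s) := by
    rw [Finset.mul_sum, ← Finset.sum_add_distrib]
    exact Finset.sum_congr rfl fun i _ => by ring
  rw [h2]
  have h3 : ∑ i, ∑ j, v i * (X i j * v j) = ∑ i, v i * ∑ j, X i j * v j :=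
    Finset.sum_congr rfl fun i _ => by rw [Finset.mul_sum]
  rw [h3]
  ring

lemma key {n m : ℕ} (a : Fin m → ℝ) (b : Fin m → Fin n → ℝ)
    (F : Fin m → Matrix (Fin n) (Fin n) ℝ) (c : ℝ) (d : Fin n → ℝ)
    (Q : Matrix (Fin n) (Fin n) ℝ)
    {C : Set (Fin m → ℝ)} (hC : Convex ℝ C) (hCl : IsClosed C)
    (hbase : ∀ x : Fin n → ℝ, 0 ≤ c + d ⬝ᵥ x + x ⬝ᵥ Q *ᵥ x →
      (fun i => a i + b i ⬝ᵥ x + x ⬝ᵥ (F i) *ᵥ x) ∈ C) :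
    ∀ (L : List (Fin n → ℝ)) (x : Fin n → ℝ),
      0 ≤ c + d ⬝ᵥ x + x ⬝ᵥ Q *ᵥ x + (L.map fun u => u ⬝ᵥ Q *ᵥ u).sum →
      (fun i => a i + b i ⬝ᵥ x + x ⬝ᵥ (F i) *ᵥ x + (L.map fun u => u ⬝ᵥ (F i) *ᵥ u).sum) ∈ C := by
  intro L
  induction L with
  | nil =>
    intro x hx
    simpa using hbase x (by simpa using hx)
  | cons u L ih =>
    intro x hx
    have hβγ : 0 ≤ (c + d ⬝ᵥ x + x ⬝ᵥ Q *ᵥ x + (L.map fun u => u ⬝ᵥ Q *ᵥ u).sum)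
        + u ⬝ᵥ Q *ᵥ u := by
      simp only [List.map_cons, List.sum_cons] at hx
      linarith
    have happ := oneDim hC hCl
      (fun i => a i + b i ⬝ᵥ x + x ⬝ᵥ (F i) *ᵥ x + (L.map fun u => u ⬝ᵥ (F i) *ᵥ u).sum)
      (fun i => b i ⬝ᵥ u + (u ⬝ᵥ (F i) *ᵥ x + x ⬝ᵥ (F i) *ᵥ u))
      (fun i => u ⬝ᵥ (F i) *ᵥ u)
      (c + d ⬝ᵥ x + x ⬝ᵥ Q *ᵥ x + (L.map fun u => u ⬝ᵥ Q *ᵥ u).sum)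
      (d ⬝ᵥ u + (u ⬝ᵥ Q *ᵥ x + x ⬝ᵥ Q *ᵥ u))
      (u ⬝ᵥ Q *ᵥ u) hβγ ?_
    · have : (fun i => a i + b i ⬝ᵥ x + x ⬝ᵥ (F i) *ᵥ x
          + ((u :: L).map fun u => u ⬝ᵥ (F i) *ᵥ u).sum)
          = (fun i => a i + b i ⬝ᵥ x + x ⬝ᵥ (F i) *ᵥ x + (L.map fun u => u ⬝ᵥ (F i) *ᵥ u).sum)
            + (fun i => u ⬝ᵥ (F i) *ᵥ u) := by
        funext i
        simp only [List.map_cons, List.sum_cons, Pi.add_apply]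
        ring
      rw [this]
      exact happ
    · intro t ht
      have hq : 0 ≤ c + d ⬝ᵥ (x + t • u) + (x + t • u) ⬝ᵥ Q *ᵥ (x + t • u)
          + (L.map fun u => u ⬝ᵥ Q *ᵥ u).sum := by
        rw [lin_expand, quad_expand]
        linarith [ht]
      have hmem := ih (x + t • u) hq
      have heq : (fun i => a i + b i ⬝ᵥ (x + t • u) + (x + t • u) ⬝ᵥ (F i) *ᵥ (x + t • u)
            + (L.map fun u => u ⬝ᵥ (F i) *ᵥ u).sum)
          = (fun i => a i + b i ⬝ᵥ x + x ⬝ᵥ (F i) *ᵥ x + (L.map fun u => u ⬝ᵥ (F i) *ᵥ u).sum)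
            + t • (fun i => b i ⬝ᵥ u + (u ⬝ᵥ (F i) *ᵥ x + x ⬝ᵥ (F i) *ᵥ u))
            + t ^ 2 • (fun i => u ⬝ᵥ (F i) *ᵥ u) := by
        funext i
        simp only [Pi.add_apply, Pi.smul_apply, smul_eq_mul]
        rw [lin_expand, quad_expand]
        ring
      rw [heq] at hmem
      exact hmem

lemma dot_vecMulVec {n : ℕ} (u w v : Fin n → ℝ) :
    v ⬝ᵥ (vecMulVec u w) *ᵥ v = (v ⬝ᵥ u) * (w ⬝ᵥ v) := by
  simp only [dotProduct, mulVec, vecMulVec_apply, Finset.mul_sum, Finset.sum_mul]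
  rw [Finset.sum_comm]
  exact Finset.sum_congr rfl fun i _ => Finset.sum_congr rfl fun j _ => by ring

theorem stmt2 {n m : ℕ} (a : Fin m → ℝ) (b : Fin m → Fin n → ℝ)
    (F : Fin m → Matrix (Fin n) (Fin n) ℝ) (hF : ∀ i, (F i).IsSymm)
    (c : ℝ) (d : Fin n → ℝ) (Q : Matrix (Fin n) (Fin n) ℝ) (hQ : Q.IsSymm)
    (T : Set (Fin n → ℝ)) (hT : T = {x | 0 ≤ c + d ⬝ᵥ x + x ⬝ᵥ Q.mulVec x})
    (hTne : T.Nonempty)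
    (V W : Set (Fin m → ℝ))
    (hV : V = {y | ∃ x ∈ T, y = fun i => a i + b i ⬝ᵥ x + x ⬝ᵥ (F i).mulVec x})
    (hW : W = {y | ∃ (x : Fin n → ℝ) (X : Matrix (Fin n) (Fin n) ℝ),
        X.IsSymm ∧ (momMat x X).PosSemidef ∧ 0 ≤ c + d ⬝ᵥ x + frob Q X ∧
        y = fun i => a i + b i ⬝ᵥ x + frob (F i) X}) :
    closure (convexHull ℝ V) = closure W := by
  -- V ⊆ W
  have hVW : V ⊆ W := by
    intro y hy
    rw [hV] at hy
    obtain ⟨x, hxT, rfl⟩ := hy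
    rw [hT] at hxT
    rw [hW]
    refine ⟨x, vecMulVec x x, ?_, PosSemidef.of_dotProduct_mulVec_nonneg ?_ ?_, ?_, ?_⟩
    · show (vecMulVec x x)ᵀ = vecMulVec x x
      ext i j
      simp [vecMulVec_apply, transpose_apply, mul_comm]
    · -- Hermitian
      show (momMat x (vecMulVec x x))ᴴ = momMat x (vecMulVec x x)
      rw [momMat, fromBlocks_conjTranspose, conjTranspose_replicateRow, conjTranspose_replicateCol]
      have hX : (vecMulVec x x)ᴴ = vecMulVec x x := by
        rw [conjTranspose_eq_transpose_of_trivial]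
        ext i j
        simp [vecMulVec_apply, transpose_apply, mul_comm]
      rw [hX]
      simp [momMat]
    · -- quadratic form
      intro z
      have hz : z = Sum.elim (fun _ => z (Sum.inl 0)) (fun i => z (Sum.inr i)) := by
        funext w
        rcases w with i | i
        · simp [Fin.eq_zero i]
        · simp
      rw [star_trivial, hz, momMat_quadform, dot_vecMulVec]
      rw [dotProduct_comm (fun i => z (Sum.inr i)) x]
      nlinarith [sq_nonneg (z (Sum.inl 0) + x ⬝ᵥ fun i => z (Sum.inr i))]
    · rw [show vecMulVec x x = vecMulVec x x from rfl, frob_vecMulVec]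
      exact hxT
    · funext i
      rw [frob_vecMulVec]
  -- W is convex
  have hWconv : Convex ℝ W := by
    rw [hW]
    rintro y1 ⟨x1, X1, hs1, hp1, hc1, rfl⟩ y2 ⟨x2, X2, hs2, hp2, hc2, rfl⟩ p q hp hq hpq
    refine ⟨p • x1 + q • x2, p • X1 + q • X2, ?_, ?_, ?_, ?_⟩
    · show (p • X1 + q • X2)ᵀ = p • X1 + q • X2
      rw [transpose_add, transpose_smul, transpose_smul, hs1.eq, hs2.eq]
    · have hmm : momMat (p • x1 + q • x2) (p • X1 + q • X2)
          = p • momMat x1 X1 + q • momMat x2 X2 := by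
        ext i j
        rcases i with i | i <;> rcases j with j | j <;>
          simp [momMat, fromBlocks, one_apply, Fin.eq_zero] <;> linarith
      rw [hmm]
      refine PosSemidef.of_dotProduct_mulVec_nonneg ?_ ?_
      · show (p • momMat x1 X1 + q • momMat x2 X2)ᴴ = _
        rw [conjTranspose_add, conjTranspose_smul, conjTranspose_smul, hp1.1, hp2.1]
        simp
      · intro z
        have e : star z ⬝ᵥ (p • momMat x1 X1 + q • momMat x2 X2) *ᵥ z
            = p * (star z ⬝ᵥ momMat x1 X1 *ᵥ z) + q * (star z ⬝ᵥ momMat x2 X2 *ᵥ z) := by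
          rw [add_mulVec, smul_mulVec, smul_mulVec, dotProduct_add,
            dotProduct_smul, dotProduct_smul]
          simp
        rw [e]
        exact add_nonneg (mul_nonneg hp (hp1.dotProduct_mulVec_nonneg z)) (mul_nonneg hq (hp2.dotProduct_mulVec_nonneg z))
    · rw [frob_add, frob_smul, frob_smul, dotProduct_add, dotProduct_smul, dotProduct_smul]
      simp only [smul_eq_mul]
      rw [show (c:ℝ) = (p + q) * c by rw [hpq]; ring]
      linarith [mul_nonneg hp hc1, mul_nonneg hq hc2]
    · funext i
      simp only [Pi.add_apply, Pi.smul_apply, smul_eq_mul]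
      rw [frob_add, frob_smul, frob_smul, dotProduct_add, dotProduct_smul, dotProduct_smul]
      simp only [smul_eq_mul]
      linear_combination (a i) * hpq
  -- W ⊆ closure (convexHull ℝ V)
  have hWC : W ⊆ closure (convexHull ℝ V) := by
    intro y hy
    rw [hW] at hy
    obtain ⟨x, X, hXs, hpsd, hcon, rfl⟩ := hy
    have hCc : Convex ℝ (closure (convexHull ℝ V)) := (convex_convexHull ℝ V).closure
    have hCl : IsClosed (closure (convexHull ℝ V)) := isClosed_closure
    have hbase : ∀ z : Fin n → ℝ, 0 ≤ c + d ⬝ᵥ z + z ⬝ᵥ Q *ᵥ z →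
        (fun i => a i + b i ⬝ᵥ z + z ⬝ᵥ (F i) *ᵥ z) ∈ closure (convexHull ℝ V) := by
      intro z hz
      apply subset_closure
      apply subset_convexHull
      rw [hV]
      exact ⟨z, by rw [hT]; exact hz, rfl⟩
    -- Schur complement Y = X - x xᵀ is PSD
    set Y := X - vecMulVec x x with hYdef
    have hYpsd : Y.PosSemidef := by
      refine PosSemidef.of_dotProduct_mulVec_nonneg ?_ ?_
      · show Yᴴ = Y
        rw [conjTranspose_eq_transpose_of_trivial]
        rw [hYdef, transpose_sub, hXs.eq]
        congr 1
        ext i j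
        simp [vecMulVec_apply, transpose_apply, mul_comm]
      · intro v
        rw [star_trivial]
        have h1 := hpsd.dotProduct_mulVec_nonneg (Sum.elim (fun _ => -(x ⬝ᵥ v)) v)
        rw [star_trivial, momMat_quadform] at h1
        have e : v ⬝ᵥ Y *ᵥ v = v ⬝ᵥ X *ᵥ v - (x ⬝ᵥ v) * (x ⬝ᵥ v) := by
          rw [hYdef, sub_mulVec, dotProduct_sub, dot_vecMulVec, dotProduct_comm v x]
        rw [e]
        nlinarith [h1]
    obtain ⟨B, hB⟩ : ∃ B : Matrix (Fin n) (Fin n) ℝ, Y = Bᴴ * B := by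
      open scoped MatrixOrder in exact CStarAlgebra.nonneg_iff_eq_star_mul_self.mp hYpsd.nonneg
    have hXdec : X = vecMulVec x x + ∑ j, vecMulVec (B j) (B j) := by
      ext i k
      have h1 : Y i k = ∑ j, B j i * B j k := by
        rw [hB]
        simp [mul_apply, conjTranspose_apply]
      have h2 : Y i k = X i k - x i * x k := by
        rw [hYdef]
        simp [Matrix.sub_apply, vecMulVec_apply]
      rw [Matrix.add_apply, Matrix.sum_apply, vecMulVec_apply]
      have : ∑ j, vecMulVec (B j) (B j) i k = ∑ j, B j i * B j k := by
        exact Finset.sum_congr rfl fun j _ => by rw [vecMulVec_apply]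
      rw [this]
      linarith
    have hfrobX : ∀ (A : Matrix (Fin n) (Fin n) ℝ),
        frob A X = x ⬝ᵥ A *ᵥ x + ∑ j, (B j) ⬝ᵥ A *ᵥ (B j) := by
      intro A
      rw [hXdec, frob_add, frob_vecMulVec, frob_sum]
      congr 1
      exact Finset.sum_congr rfl fun j _ => by rw [frob_vecMulVec]
    have hofn : ∀ (A : Matrix (Fin n) (Fin n) ℝ),
        ((List.ofFn B).map fun u => u ⬝ᵥ A *ᵥ u).sum = ∑ j, B j ⬝ᵥ A *ᵥ B j := by
      intro A
      erw [List.map_ofFn, List.sum_ofFn]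
      rfl
    have hcon' : 0 ≤ c + d ⬝ᵥ x + x ⬝ᵥ Q *ᵥ x
        + ((List.ofFn B).map fun u => u ⬝ᵥ Q *ᵥ u).sum := by
      rw [hofn Q]
      have := hcon
      rw [hfrobX Q] at this
      linarith
    have hk := key a b F c d Q hCc hCl hbase (List.ofFn B) x hcon'
    have heq : (fun i => a i + b i ⬝ᵥ x + x ⬝ᵥ (F i) *ᵥ x
          + (((List.ofFn B)).map fun u => u ⬝ᵥ (F i) *ᵥ u).sum)
        = fun i => a i + b i ⬝ᵥ x + frob (F i) X := by
      funext i
      rw [hofn (F i), hfrobX (F i)]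
      ring
    rw [heq] at hk
    exact hk
  apply Subset.antisymm
  · exact closure_mono (convexHull_min hVW hWconv)
  · exact closure_minimal hWC isClosed_closure
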